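/- Let d ≥ 1 and consider the action of the group of positive reals on ℝ^d × ℝ^d given by t•(x, y) = (t·x, t⁻¹·y). Let M = {(a, b) ∈ ℝ^d × ℝ^d : ‖a‖ = ‖b‖}. Then for every (x, y) ∈ ℝ^d × ℝ^d the topological closure of the orbit {(t·x, t⁻¹·y) : t > 0} intersects M; moreover, if the orbit of (x, y) is closed, it intersects M in exactly one point. -/

import Mathlib

/-!
If `x` and `y` are both nonzero, `‖t • x‖ = ‖t⁻¹ • y‖` means `t ^ 2 * ‖x‖ = ‖y‖`, which has
exactly one positive solution, so the orbit itself meets `M` exactly once. If one of them is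
zero, letting `t → ∞` or `t → 0⁺` pushes the orbit to `(0, 0) ∈ M`; this limit lies on the orbit
only when both vanish, so a closed orbit is then the single point `(0, 0)`.
-/

open Filter Topology

section ScalingOrbit

variable {E : Type*} [NormedAddCommGroup E] [NormedSpace ℝ E]

def scalingOrbit (x y : E) : Set (E × E) :=
  {p | ∃ t : ℝ, 0 < t ∧ p = (t • x, t⁻¹ • y)}

lemma norm_smul_eq_norm_inv_smul_iff (x y : E) {t : ℝ} (ht : 0 < t) :
    ‖t • x‖ = ‖t⁻¹ • y‖ ↔ t ^ 2 * ‖x‖ = ‖y‖ := by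
  rw [norm_smul, norm_smul, Real.norm_of_nonneg ht.le, Real.norm_of_nonneg (inv_nonneg.2 ht.le),
    eq_inv_mul_iff_mul_eq₀ ht.ne', ← mul_assoc, sq]

lemma existsUnique_pos_sq_mul_eq {a b : ℝ} (ha : 0 < a) (hb : 0 < b) :
    ∃! t : ℝ, 0 < t ∧ t ^ 2 * a = b := by
  refine ⟨√(b / a), ⟨by positivity, ?_⟩, ?_⟩
  · rw [Real.sq_sqrt (by positivity), div_mul_cancel₀ _ ha.ne']
  · rintro s ⟨hs, rfl⟩
    rw [mul_div_cancel_right₀ _ ha.ne', Real.sqrt_sq hs.le]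

lemma existsUnique_mem_scalingOrbit_norm_eq {x y : E} (hx : x ≠ 0) (hy : y ≠ 0) :
    ∃! p : E × E, p ∈ scalingOrbit x y ∧ ‖p.1‖ = ‖p.2‖ := by
  obtain ⟨t, ⟨ht, hteq⟩, huniq⟩ :=
    existsUnique_pos_sq_mul_eq (norm_pos_iff.2 hx) (norm_pos_iff.2 hy)
  refine ⟨(t • x, t⁻¹ • y), ⟨⟨t, ht, rfl⟩, (norm_smul_eq_norm_inv_smul_iff x y ht).2 hteq⟩, ?_⟩
  rintro _ ⟨⟨s, hs, rfl⟩, hnorm⟩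
  rw [huniq s ⟨hs, (norm_smul_eq_norm_inv_smul_iff x y hs).1 hnorm⟩]

lemma zero_mem_scalingOrbit_iff {x y : E} : (0 : E × E) ∈ scalingOrbit x y ↔ x = 0 ∧ y = 0 := by
  constructor
  · rintro ⟨t, ht, h⟩
    simpa [Prod.ext_iff, eq_comm, ht.ne'] using h
  · rintro ⟨rfl, rfl⟩
    exact ⟨1, one_pos, by simp [Prod.zero_eq_mk]⟩

lemma zero_mem_closure_scalingOrbit {x y : E} (h : x = 0 ∨ y = 0) :
    (0 : E × E) ∈ closure (scalingOrbit x y) := by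
  rcases h with rfl | rfl
  · have hlim : Tendsto (fun t : ℝ => (t • (0 : E), t⁻¹ • y)) atTop (𝓝 (0, 0)) := by
      simpa using tendsto_const_nhds.prodMk_nhds ((tendsto_inv_atTop_zero (𝕜 := ℝ)).smul_const y)
    exact mem_closure_of_tendsto hlim ((eventually_gt_atTop 0).mono fun t ht => ⟨t, ht, rfl⟩)
  · have hlim : Tendsto (fun t : ℝ => (t • x, t⁻¹ • (0 : E))) (𝓝[>] 0) (𝓝 (0, 0)) := by
      have hid : Tendsto (fun t : ℝ => t) (𝓝[>] 0) (𝓝 0) :=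
        tendsto_nhdsWithin_of_tendsto_nhds tendsto_id
      simpa using (hid.smul_const x).prodMk_nhds (tendsto_const_nhds (x := (0 : E)))
    exact mem_closure_of_tendsto hlim
      (eventually_mem_nhdsWithin.mono fun t (ht : 0 < t) => ⟨t, ht, rfl⟩)

end ScalingOrbit

theorem kempf_ness_set_meets_orbits_general {d : ℕ}
    (x y : EuclideanSpace ℝ (Fin d)) :
    (∃ p : EuclideanSpace ℝ (Fin d) × EuclideanSpace ℝ (Fin d),
        p ∈ closure {p : EuclideanSpace ℝ (Fin d) × EuclideanSpace ℝ (Fin d) |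
            ∃ t : ℝ, 0 < t ∧ p = (t • x, t⁻¹ • y)} ∧ ‖p.1‖ = ‖p.2‖) ∧
    (IsClosed {p : EuclideanSpace ℝ (Fin d) × EuclideanSpace ℝ (Fin d) |
          ∃ t : ℝ, 0 < t ∧ p = (t • x, t⁻¹ • y)} →
      ∃! p : EuclideanSpace ℝ (Fin d) × EuclideanSpace ℝ (Fin d),
        (∃ t : ℝ, 0 < t ∧ p = (t • x, t⁻¹ • y)) ∧ ‖p.1‖ = ‖p.2‖) := by
  change (∃ p, p ∈ closure (scalingOrbit x y) ∧ ‖p.1‖ = ‖p.2‖) ∧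
    (IsClosed (scalingOrbit x y) → ∃! p, p ∈ scalingOrbit x y ∧ ‖p.1‖ = ‖p.2‖)
  by_cases hzero : x = 0 ∨ y = 0
  · refine ⟨⟨0, zero_mem_closure_scalingOrbit hzero, rfl⟩, fun hcl => ?_⟩
    obtain ⟨rfl, rfl⟩ :=
      zero_mem_scalingOrbit_iff.1 (hcl.closure_subset (zero_mem_closure_scalingOrbit hzero))
    refine ⟨0, ⟨zero_mem_scalingOrbit_iff.2 ⟨rfl, rfl⟩, rfl⟩, ?_⟩
    rintro _ ⟨⟨t, -, rfl⟩, -⟩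
    simp
  · push Not at hzero
    have huniq := existsUnique_mem_scalingOrbit_norm_eq hzero.1 hzero.2
    obtain ⟨p, ⟨hp, hnorm⟩, -⟩ := id huniq
    exact ⟨⟨p, subset_closure hp, hnorm⟩, fun _ => huniq⟩

/-- **Kempf–Ness set.** For the action `t • (x,y) = (t·x, t⁻¹·y)` of the
positive reals on `ℝ^d × ℝ^d` and `M = {(a,b) : ‖a‖ = ‖b‖}`, the closure of every orbit meets
`M`; and a closed orbit meets `M` in exactly one point. -/
theorem kempf_ness_set_meets_orbits {d : ℕ} (hd : 1 ≤ d)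
    (x y : EuclideanSpace ℝ (Fin d)) :
    (∃ p : EuclideanSpace ℝ (Fin d) × EuclideanSpace ℝ (Fin d),
        p ∈ closure {p : EuclideanSpace ℝ (Fin d) × EuclideanSpace ℝ (Fin d) |
            ∃ t : ℝ, 0 < t ∧ p = (t • x, t⁻¹ • y)} ∧ ‖p.1‖ = ‖p.2‖) ∧
    (IsClosed {p : EuclideanSpace ℝ (Fin d) × EuclideanSpace ℝ (Fin d) |
          ∃ t : ℝ, 0 < t ∧ p = (t • x, t⁻¹ • y)} →
      ∃! p : EuclideanSpace ℝ (Fin d) × EuclideanSpace ℝ (Fin d),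
        (∃ t : ℝ, 0 < t ∧ p = (t • x, t⁻¹ • y)) ∧ ‖p.1‖ = ‖p.2‖) :=
  kempf_ness_set_meets_orbits_general x y
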